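/- arXiv:1601.01581 — 2 statements merged into one kernel-verified Lean document; each statement's English description precedes it below -/
import Mathlib

section
/- For every partition λ with at most n nonzero parts, G^{(α,β)}_λ(x₁/(1−βx₁), …, x_n/(1−βx_n)) = G^{(α+β,0)}_λ(x₁,…,x_n); that is, the bialternant expression with parameters (α, β) evaluated at the pairwise distinct rational functions x_i/(1−βx_i) equals the bialternant expression with parameters (α+β, 0) evaluated at x₁,…,x_n. -/
/-!
Put `cᵢ = (1 - β xᵢ)⁻¹`. Under `yᵢ = xᵢ cᵢ` one has `1 + β yᵢ = cᵢ` and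
`1 - α yᵢ = (1 - (α + β) xᵢ) cᵢ`, so the `(i, j)` entry of the `(α, β)` bialternant at `y` is
`cᵢ^(n-1)` times the `(α + β, 0)` entry at `x`: the powers of `cᵢ` contributed by `yᵢ^(λⱼ+n-1-j)`,
`(1 + β yᵢ)^j` and `(1 - α yᵢ)^(-λⱼ)` add up to `n - 1` whatever `j` is. Since also
`yᵢ - yⱼ = (xᵢ - xⱼ) cᵢ cⱼ`, both numerator and denominator acquire the factor `∏ᵢ cᵢ^(n-1)`.
-/

/-- The canonical stable Grothendieck polynomial `G^{(α,β)}_λ(y₁,…,yₙ)`, defined by the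
bialternant formula
`G^{(α,β)}_λ = det[ yᵢ^{λⱼ+n-j} (1+βyᵢ)^{j-1} (1-αyᵢ)^{-λⱼ} ] / ∏_{i<j} (yᵢ - yⱼ)`.
Here `lam j` is the part `λ_{j+1}` (0-indexed `j`). -/
noncomputable def Gb {K : Type*} [Field K] (n : ℕ) (α β : K) (lam : Fin n → ℕ)
    (y : Fin n → K) : K :=
  (Matrix.of fun i j : Fin n =>
      y i ^ (lam j + (n - 1 - (j : ℕ))) * (1 + β * y i) ^ (j : ℕ) *
        ((1 - α * y i) ^ lam j)⁻¹).det /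
    ∏ i : Fin n, ∏ j ∈ Finset.Ioi i, (y i - y j)

theorem Fin.prod_prod_Ioi_mul {M : Type*} [CommMonoid M] {n : ℕ} (c : Fin n → M) :
    ∏ i : Fin n, ∏ j ∈ Finset.Ioi i, (c i * c j) = ∏ i : Fin n, c i ^ (n - 1) := by
  have hswap : ∏ i : Fin n, ∏ j ∈ Finset.Ioi i, c j = ∏ j : Fin n, ∏ _i ∈ Finset.Iio j, c j :=
    Finset.prod_comm' fun i j => by simp
  simp_rw [Finset.prod_mul_distrib, hswap, ← Finset.prod_mul_distrib, Finset.prod_const,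
    ← pow_add, Fin.card_Ioi, Fin.card_Iio]
  refine Finset.prod_congr rfl fun i _ => congrArg _ ?_
  omega

section Substitution

variable {K : Type*} [Field K] {α β s t : K}

theorem one_add_mul_div_one_sub_mul (ht : 1 - β * t ≠ 0) :
    1 + β * (t / (1 - β * t)) = (1 - β * t)⁻¹ := by
  rw [← one_div, mul_div_assoc', eq_div_iff ht, add_mul, div_mul_cancel₀ _ ht]
  ring

theorem one_sub_mul_div_one_sub_mul (ht : 1 - β * t ≠ 0) :
    1 - α * (t / (1 - β * t)) = (1 - (α + β) * t) * (1 - β * t)⁻¹ := by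
  rw [← div_eq_mul_inv, mul_div_assoc', eq_div_iff ht, sub_mul, div_mul_cancel₀ _ ht]
  ring

theorem div_one_sub_mul_sub_div_one_sub_mul (hs : 1 - β * s ≠ 0) (ht : 1 - β * t ≠ 0) :
    s / (1 - β * s) - t / (1 - β * t) = (s - t) * ((1 - β * s)⁻¹ * (1 - β * t)⁻¹) := by
  rw [div_sub_div _ _ hs ht, div_eq_mul_inv, mul_inv]
  ring

theorem mul_pow_add_mul_pow_mul_inv {c : K} (hc : c ≠ 0) (t u : K) (a m j : ℕ) :
    (t * c) ^ (a + m) * c ^ j * ((u * c) ^ a)⁻¹ = c ^ (m + j) * (t ^ (a + m) * (u ^ a)⁻¹) := by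
  calc (t * c) ^ (a + m) * c ^ j * ((u * c) ^ a)⁻¹
      = c ^ (m + j) * (t ^ (a + m) * (u ^ a)⁻¹) * (c ^ a * (c ^ a)⁻¹) := by
        rw [mul_pow, mul_pow, mul_inv]; ring
    _ = c ^ (m + j) * (t ^ (a + m) * (u ^ a)⁻¹) := by
        rw [mul_inv_cancel₀ (pow_ne_zero a hc), mul_one]

end Substitution

theorem stmt2_general {K : Type*} [Field K] (n : ℕ) (α β : K) (x : Fin n → K)
    (hβ : ∀ i, 1 - β * x i ≠ 0)
    (lam : Fin n → ℕ) :
    Gb n α β lam (fun i => x i / (1 - β * x i)) = Gb n (α + β) 0 lam x := by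
  have hc : ∀ i, (1 - β * x i)⁻¹ ≠ 0 := fun i => inv_ne_zero (hβ i)
  have hprod : ∏ i, (1 - β * x i)⁻¹ ^ (n - 1) ≠ 0 :=
    Finset.prod_ne_zero_iff.2 fun i _ => pow_ne_zero _ (hc i)
  unfold Gb
  rw [← mul_div_mul_left _ (∏ i : Fin n, ∏ j ∈ Finset.Ioi i, (x i - x j)) hprod,
    ← Matrix.det_mul_column]
  congr 1
  · congr 2
    funext i j
    have hj : n - 1 - (j : ℕ) + j = n - 1 := Nat.sub_add_cancel (Nat.le_sub_one_of_lt j.isLt)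
    simp only [Matrix.of_apply]
    rw [one_add_mul_div_one_sub_mul (hβ i), one_sub_mul_div_one_sub_mul (hβ i), div_eq_mul_inv,
      mul_pow_add_mul_pow_mul_inv (hc i), hj, zero_mul, add_zero, one_pow, mul_one]
  · rw [mul_comm, ← Fin.prod_prod_Ioi_mul]
    simp only [div_one_sub_mul_sub_div_one_sub_mul (hβ _) (hβ _), Finset.prod_mul_distrib]

/-- for every partition `λ` with at most `n` nonzero parts,
`G^{(α,β)}_λ(x₁/(1-βx₁), …, xₙ/(1-βxₙ)) = G^{(α+β,0)}_λ(x₁,…,xₙ)`.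
(Stated over an arbitrary field with the nondegeneracy conditions that hold automatically in
`ℚ(α, β, x₁, …, xₙ)`; there the points `xᵢ/(1-βxᵢ)` are automatically pairwise distinct.) -/
theorem stmt2 {K : Type*} [Field K] (n : ℕ) (hn : 0 < n) (α β : K) (x : Fin n → K)
    (hx : Function.Injective x) (hβ : ∀ i, 1 - β * x i ≠ 0)
    (hαβ : ∀ i, 1 - (α + β) * x i ≠ 0)
    (lam : Fin n → ℕ) (hlam : Antitone lam) :
    Gb n α β lam (fun i => x i / (1 - β * x i)) = Gb n (α + β) 0 lam x :=
  stmt2_general n α β x hβ lam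
end

section
/- In the formal power series ring K[[t]], 1 + (α+β+t)·∑_{k≥1} G^{(α,β)}_{(k)}(x₁,…,x_n)·t^{k−1} = ∏_{j=1}^n (1+βx_j)·((1−αx_j) − x_j t)^{−1}, where (k) denotes the one-row partition with k boxes, each factor on the right is invertible in K[[t]] since its constant coefficient 1−αx_j is a nonzero element of K, and the infinite sum on the left is the power series whose coefficient of t^{k−1} is G^{(α,β)}_{(k)}(x₁,…,x_n). -/
/-! Put `s = α + β + t`, `bᵢ = 1 + βxᵢ` and `vᵢ = 1 - αxᵢ - xᵢt`, so that `bᵢ = vᵢ + s xᵢ`.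
Summing the bialternant formula over `k` turns its first column into the geometric series
`xᵢⁿ / vᵢ`, while the other columns are those of the projective Vandermonde matrix
`[bᵢ^j xᵢ^{n-1-j}]`, whose determinant is the Vandermonde product `V`. Multiplied by `s`, the
first column becomes `xᵢ^{n-1} (bᵢ / vᵢ - 1)`: the part `-xᵢ^{n-1}` contributes `-V`, and the part
`xᵢ^{n-1} bᵢ / vᵢ` contributes `∏ bᵢ / vᵢ · V` by column operations once the `vᵢ` are cleared
from the rows. Hence `V (1 + s F) = V ∏ bᵢ / vᵢ` for the generating series `F`. -/

open Matrix Finset PowerSeries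

section ProjVandermonde

variable {R : Type*} [CommRing R] {m : ℕ} (ξ v b : Fin (m + 1) → R) (s : R)

lemma det_updateCol_zero_mul_projVandermonde (hb : ∀ i, v i + s * ξ i = b i) :
    det (updateCol (of fun i j => v i * projVandermonde b ξ i j) 0 fun i => ξ i ^ m * b i) =
      (∏ i, b i) * det (projVandermonde b ξ) := by
  -- scaling row `i` by `bᵢ` and then subtracting `s` times each column from the next one
  rw [← det_mul_column]
  refine (det_eq_of_forall_col_eq_smul_add_pred (fun _ => s) (fun i => ?_) (fun i j => ?_)).symm
  · simp [projVandermonde_apply, mul_comm]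
  · have hrev : ((Fin.castSucc j).rev : ℕ) = (j.succ.rev : ℕ) + 1 := by
      simp only [Fin.val_rev, Fin.val_castSucc, Fin.val_succ]; omega
    simp only [of_apply, updateCol_ne (Fin.succ_ne_zero j), projVandermonde_apply]
    rw [hrev, Fin.val_castSucc, Fin.val_succ, ← hb i]
    ring

lemma mul_det_updateCol_zero_projVandermonde (w : Fin (m + 1) → R) (hvw : ∀ i, v i * w i = 1)
    (hb : ∀ i, v i + s * ξ i = b i) :
    s * det (updateCol (projVandermonde b ξ) 0 fun i => ξ i ^ (m + 1) * w i) =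
      ((∏ i, b i) * (∏ i, w i) - 1) * det (projVandermonde b ξ) := by
  have hcol : s • (fun i => ξ i ^ (m + 1) * w i) =
      (fun i => ξ i ^ m * b i * w i) - fun i => ξ i ^ m := by
    funext i
    simp only [Pi.smul_apply, Pi.sub_apply, smul_eq_mul, ← hb i]
    linear_combination (-ξ i ^ m) * hvw i
  have hscale : updateCol (projVandermonde b ξ) 0 (fun i => ξ i ^ m * b i * w i) =
      of fun i j => w i * updateCol (of fun i j => v i * projVandermonde b ξ i j) 0
        (fun i => ξ i ^ m * b i) i j := by
    ext i j
    rcases eq_or_ne j 0 with rfl | hj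
    · simp [mul_comm]
    · simp only [updateCol_ne hj, of_apply]
      linear_combination (-projVandermonde b ξ i j) * hvw i
  have hself : updateCol (projVandermonde b ξ) 0 (fun i => ξ i ^ m) = projVandermonde b ξ := by
    ext i j
    rcases eq_or_ne j 0 with rfl | hj
    · simp [projVandermonde_apply]
    · simp [updateCol_ne hj]
  rw [← det_updateCol_smul, hcol, sub_eq_add_neg, ← neg_one_smul R, det_updateCol_add,
    det_updateCol_smul, hself, hscale, det_mul_column,
    det_updateCol_zero_mul_projVandermonde ξ v b s hb]
  ring

lemma det_projVandermonde_one_add_mul (a : Fin (m + 1) → R) (β : R) :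
    det (projVandermonde (fun i => 1 + β * a i) a) = ∏ i, ∏ j ∈ Ioi i, (a i - a j) := by
  rw [det_projVandermonde]
  exact prod_congr rfl fun i _ => prod_congr rfl fun j _ => by ring

end ProjVandermonde

namespace PowerSeries

variable {R : Type*} [CommRing R]

lemma coeff_det_updateCol_map_C {n : Type*} [Fintype n] [DecidableEq n] (A : Matrix n n R)
    (j : n) (c : n → R⟦X⟧) (k : ℕ) :
    coeff k (det (updateCol (A.map C) j c)) = det (updateCol A j fun i => coeff k (c i)) := by
  rw [← cramer_apply, ← cramer_apply, cramer_eq_adjugate_mulVec, cramer_eq_adjugate_mulVec,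
    ← RingHom.mapMatrix_apply, ← RingHom.map_adjugate]
  simp [mulVec, dotProduct, coeff_C_mul]

lemma coeff_inv_C_sub_C_mul_X {K : Type*} [Field K] {c : K} (hc : c ≠ 0) (a : K) (k : ℕ) :
    coeff k (C c - C a * X)⁻¹ = a ^ k / c ^ (k + 1) := by
  have h : rescale a (invUnitsSub (Units.mk0 c hc)) * (C c - C a * X) = 1 := by
    have hC : rescale a (C c) = C c := by
      ext n; rcases n with _ | n <;> simp [coeff_rescale, coeff_C]
    simpa [rescale_X, hC] using congrArg (rescale a) (invUnitsSub_mul_sub (Units.mk0 c hc))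
  rw [(PowerSeries.inv_eq_iff_mul_eq_one (by simpa using hc)).mpr h, coeff_rescale,
    coeff_invUnitsSub]
  simp [divp, div_eq_mul_inv]

end PowerSeries

lemma Gb_oneRow_eq {K : Type*} [Field K] (m k : ℕ) (α β : K) (x : Fin (m + 1) → K) :
    Gb (m + 1) α β (fun j => if (j : ℕ) = 0 then k + 1 else 0) x =
      det (updateCol (projVandermonde (fun i => 1 + β * x i) x) 0
        fun i => x i ^ (m + 1 + k) / (1 - α * x i) ^ (k + 1)) /
        ∏ i, ∏ j ∈ Ioi i, (x i - x j) := by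
  unfold Gb
  congr 2
  ext i j
  rcases eq_or_ne j 0 with rfl | hj
  · simp only [of_apply, updateCol_self, Fin.val_zero, if_true, pow_zero, mul_one,
      Nat.add_sub_cancel, Nat.sub_zero]
    rw [div_eq_mul_inv]
    ring
  · simp [hj, projVandermonde_apply, Fin.val_rev, mul_comm]

lemma C_mul_mk_Gb_oneRow {K : Type*} [Field K] {m : ℕ} (α β : K) (x : Fin (m + 1) → K)
    (hV : ∏ i, ∏ j ∈ Ioi i, (x i - x j) ≠ 0) (hα : ∀ i, 1 - α * x i ≠ 0) :
    C (∏ i, ∏ j ∈ Ioi i, (x i - x j)) *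
        mk (fun k => Gb (m + 1) α β (fun j => if (j : ℕ) = 0 then k + 1 else 0) x) =
      det (updateCol (projVandermonde (fun i => C (1 + β * x i)) fun i => C (x i)) 0
        fun i => C (x i) ^ (m + 1) * (C (1 - α * x i) - C (x i) * X)⁻¹) := by
  have hmap : projVandermonde (fun i => C (1 + β * x i)) (fun i => C (x i)) =
      (projVandermonde (fun i => 1 + β * x i) x).map C := by
    ext i j
    simp [projVandermonde_apply]
  ext k
  rw [coeff_C_mul, coeff_mk, Gb_oneRow_eq, mul_div_cancel₀ _ hV, hmap, coeff_det_updateCol_map_C]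
  congr 2
  funext i
  rw [← map_pow, coeff_C_mul, coeff_inv_C_sub_C_mul_X (hα i)]
  ring

/-- in `K[[t]]`,
`1 + (α+β+t)·∑_{k≥1} G^{(α,β)}_{(k)}(x₁,…,xₙ) t^{k-1} = ∏_{j=1}^n (1+βxⱼ)·((1-αxⱼ) - xⱼt)⁻¹`,
where `(k)` is the one-row partition with `k` boxes and the power series on the left is the
one whose coefficient of `t^{k-1}` is `G^{(α,β)}_{(k)}(x₁,…,xₙ)`.  Each factor on the right
is invertible in `K[[t]]` since its constant coefficient `1-αxⱼ` is nonzero. -/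
theorem stmt4 {K : Type*} [Field K] (n : ℕ) (hn : 0 < n) (α β : K) (x : Fin n → K)
    (hx : Function.Injective x) (hα : ∀ i, 1 - α * x i ≠ 0) :
    (1 : PowerSeries K) + ((PowerSeries.C : K →+* PowerSeries K) (α + β) + PowerSeries.X) *
        PowerSeries.mk (fun m => Gb n α β (fun j => if (j : ℕ) = 0 then m + 1 else 0) x) =
      ∏ j : Fin n, (PowerSeries.C : K →+* PowerSeries K) (1 + β * x j) *
        ((PowerSeries.C : K →+* PowerSeries K) (1 - α * x j) - (PowerSeries.C : K →+* PowerSeries K) (x j) * PowerSeries.X)⁻¹ := by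
  obtain ⟨m, rfl⟩ : ∃ m, n = m + 1 := ⟨n - 1, by omega⟩
  set V := ∏ i, ∏ j ∈ Ioi i, (x i - x j)
  have hV : V ≠ 0 := prod_ne_zero_iff.2 fun i _ =>
    prod_ne_zero_iff.2 fun j hj => sub_ne_zero.2 (hx.ne (mem_Ioi.1 hj).ne)
  set v : Fin (m + 1) → K⟦X⟧ := fun i => C (1 - α * x i) - C (x i) * X
  have hv : ∀ i, constantCoeff (v i) ≠ 0 := by simpa [v] using hα
  have hdet : det (projVandermonde (fun i => C (1 + β * x i)) fun i => C (x i)) = C V := by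
    simpa [V, map_prod] using det_projVandermonde_one_add_mul (fun i => C (x i)) (C β)
  have key := mul_det_updateCol_zero_projVandermonde (fun i => C (x i)) v
    (fun i => C (1 + β * x i)) (C (α + β) + X) (fun i => (v i)⁻¹)
    (fun i => PowerSeries.mul_inv_cancel _ (hv i))
    (fun i => by simp only [v, map_add, map_mul, map_sub, map_one]; ring)
  rw [← C_mul_mk_Gb_oneRow α β x hV hα, hdet] at key
  apply mul_left_cancel₀ ((map_ne_zero_iff _ C_injective).2 hV)
  rw [prod_mul_distrib]
  linear_combination key
end
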